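/- arXiv:2510.25544 — 2 statements merged into one kernel-verified Lean document; each statement's English description precedes it below -/
import Mathlib

section
/- Let π be a probability distribution on a finite product space X^N. For a uniformly random permutation σ of {1,...,N} and x ∼ π, define the information profile f(i) = E[log π(x_{σ(i+1)} | x_{σ(1)},...,x_{σ(i)})] for i = 0,...,N−1. Then f is nondecreasing: f(i−1) ≤ f(i) for all 1 ≤ i ≤ N−1. -/
open Finset

/-- Marginal probability of the configuration `x` on the coordinate set `z`:
`π(x_z) = Σ_{y : y agrees with x on z} π(y)`. -/
noncomputable def margin {X : Type*} [Fintype X] [DecidableEq X] {N : ℕ}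
    (π : (Fin N → X) → ℝ) (z : Finset (Fin N)) (x : Fin N → X) : ℝ :=
  ∑ y : Fin N → X, if ∀ i ∈ z, y i = x i then π y else 0

section aux
variable {X : Type*} [Fintype X] [DecidableEq X] {N : ℕ} (π : (Fin N → X) → ℝ)

lemma margin_congr {z : Finset (Fin N)} {x x' : Fin N → X}
    (h : ∀ i ∈ z, x i = x' i) : margin π z x = margin π z x' := by
  unfold margin
  refine Finset.sum_congr rfl fun y _ => if_congr ?_ rfl rfl
  exact forall₂_congr fun i hi => by rw [h i hi]

lemma margin_pos (hpos : ∀ x, 0 < π x) (z : Finset (Fin N)) (x : Fin N → X) :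
    0 < margin π z x := by
  unfold margin
  apply Finset.sum_pos'
  · intro y _
    split
    · exact (hpos y).le
    · exact le_rfl
  · exact ⟨x, mem_univ x, by simp [hpos x]⟩

lemma margin_update {z : Finset (Fin N)} {a : Fin N} (ha : a ∉ z) (x : Fin N → X) (v : X) :
    margin π z (Function.update x a v) = margin π z x := by
  apply margin_congr
  intro i hi
  have hne : i ≠ a := fun he : i = a => ha (he ▸ hi)
  exact Function.update_of_ne hne v x

lemma sum_margin_update {z : Finset (Fin N)} {a : Fin N} (ha : a ∉ z) (x : Fin N → X) :
    ∑ v : X, margin π (insert a z) (Function.update x a v) = margin π z x := by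
  unfold margin
  rw [Finset.sum_comm]
  refine Finset.sum_congr rfl fun y _ => ?_
  have key : ∀ v : X, (∀ i ∈ insert a z, y i = Function.update x a v i)
      ↔ (y a = v ∧ ∀ i ∈ z, y i = x i) := by
    intro v
    constructor
    · intro h
      refine ⟨by simpa using h a (mem_insert_self a z), fun i hi => ?_⟩
      have := h i (mem_insert_of_mem hi)
      have hne : i ≠ a := fun he : i = a => ha (he ▸ hi)
      rwa [Function.update_of_ne hne] at this
    · rintro ⟨h1, h2⟩ i hi
      rcases mem_insert.mp hi with rfl | hi
      · simpa using h1
      · have hne : i ≠ a := fun he : i = a => ha (he ▸ hi)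
        rw [Function.update_of_ne hne]
        exact h2 i hi
  rw [Finset.sum_congr rfl fun v (_ : v ∈ univ) => if_congr (key v) rfl rfl]
  by_cases hP : ∀ i ∈ z, y i = x i
  · rw [if_pos hP]
    have h2 : ∀ v : X, (if y a = v ∧ ∀ i ∈ z, y i = x i then π y else 0)
        = if y a = v then π y else 0 := fun v => if_congr (and_iff_left hP) rfl rfl
    rw [Finset.sum_congr rfl fun v (_ : v ∈ univ) => h2 v,
      Finset.sum_ite_eq univ (y a) fun _ => π y]
    exact if_pos (mem_univ _)
  · rw [if_neg hP]
    exact Finset.sum_eq_zero fun v _ => if_neg fun hc => hP hc.2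

lemma sum_update (a : Fin N) (f : (Fin N → X) → ℝ) :
    ∑ x : Fin N → X, ∑ v : X, f (Function.update x a v)
      = (Fintype.card X : ℝ) * ∑ x : Fin N → X, f x := by
  classical
  set e := Equiv.funSplitAt a X with he
  have h1 : ∀ (x : Fin N → X) (v : X),
      Function.update x a v = e.symm (v, fun j => x j.1) := by
    intro x v
    apply e.injective
    rw [Equiv.apply_symm_apply]
    simp only [he, Equiv.funSplitAt_apply, Prod.mk.injEq]
    exact ⟨Function.update_self a v x, funext fun j => Function.update_of_ne j.2 v x⟩
  calc ∑ x : Fin N → X, ∑ v : X, f (Function.update x a v)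
      = ∑ x : Fin N → X, ∑ v : X, f (e.symm (v, (e x).2)) := by
        refine Finset.sum_congr rfl fun x _ => Finset.sum_congr rfl fun v _ => ?_
        rw [h1 x v]; rfl
    _ = ∑ p : X × ({ j // j ≠ a } → X), ∑ v : X, f (e.symm (v, p.2)) :=
        Equiv.sum_comp e (fun p => ∑ v : X, f (e.symm (v, p.2)))
    _ = ∑ u : X, ∑ w : { j // j ≠ a } → X, ∑ v : X, f (e.symm (v, w)) :=
        Fintype.sum_prod_type _
    _ = (Fintype.card X : ℝ) * ∑ w : { j // j ≠ a } → X, ∑ v : X, f (e.symm (v, w)) := by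
        rw [Finset.sum_const, card_univ, nsmul_eq_mul]
    _ = (Fintype.card X : ℝ) * ∑ w : { j // j ≠ a } → X, ∑ v : X, f (e.symm (v, w)) := rfl
    _ = (Fintype.card X : ℝ) * ∑ p : X × ({ j // j ≠ a } → X), f (e.symm p) := by
        rw [Fintype.sum_prod_type]
        congr 1
        exact Finset.sum_comm
    _ = (Fintype.card X : ℝ) * ∑ x : Fin N → X, f x := by
        rw [Equiv.sum_comp e.symm f]

lemma card_class (z : Finset (Fin N)) (y : Fin N → X) :
    (univ.filter (fun x : Fin N → X => ∀ i ∈ z, y i = x i)).card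
      = Fintype.card X ^ (N - z.card) := by
  classical
  rw [← Fintype.card_subtype]
  have e : { x : Fin N → X // ∀ i ∈ z, y i = x i } ≃ ({ i : Fin N // i ∉ z } → X) :=
    { toFun := fun x j => x.1 j.1
      invFun := fun w => ⟨fun i => if h : i ∈ z then y i else w ⟨i, h⟩,
        fun i hi => by simp [hi]⟩
      left_inv := fun x => by
        apply Subtype.ext
        funext i
        by_cases h : i ∈ z
        · simp [h, (x.2 i h).symm]
        · simp [h]
      right_inv := fun w => by
        funext j
        simp [j.2] }
  rw [Fintype.card_congr e, Fintype.card_fun, Fintype.card_subtype]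
  congr 1
  have h : univ.filter (fun i : Fin N => i ∉ z) = zᶜ := by
    ext i; simp
  rw [h, Finset.card_compl, Fintype.card_fin]

lemma grouping (z : Finset (Fin N)) (F : (Fin N → X) → ℝ)
    (hF : ∀ x x', (∀ i ∈ z, x i = x' i) → F x = F x') :
    ∑ x : Fin N → X, margin π z x * F x
      = (Fintype.card X : ℝ) ^ (N - z.card) * ∑ x : Fin N → X, π x * F x := by
  unfold margin
  simp_rw [Finset.sum_mul]
  rw [Finset.sum_comm]
  have key : ∀ y : Fin N → X,
      ∑ x : Fin N → X, (if ∀ i ∈ z, y i = x i then π y else 0) * F x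
        = (Fintype.card X : ℝ) ^ (N - z.card) * (π y * F y) := by
    intro y
    have step : ∀ x : Fin N → X,
        (if ∀ i ∈ z, y i = x i then π y else 0) * F x
          = if ∀ i ∈ z, y i = x i then π y * F y else 0 := by
      intro x
      split_ifs with h
      · rw [hF y x h]
      · ring
    simp_rw [step]
    rw [← Finset.sum_filter, Finset.sum_const, card_class, nsmul_eq_mul]
    push_cast
    ring
  rw [Finset.sum_congr rfl fun y _ => key y, ← Finset.mul_sum]

lemma sum_margin (hsum : ∑ x : Fin N → X, π x = 1) (z : Finset (Fin N)) :
    ∑ x : Fin N → X, margin π z x = (Fintype.card X : ℝ) ^ (N - z.card) := by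
  have := grouping π z (fun _ => 1) (fun _ _ _ => rfl)
  simpa [hsum] using this

lemma agree_subset {z w : Finset (Fin N)} (hzw : z ⊆ w) {x x' : Fin N → X}
    (h : ∀ i ∈ w, x i = x' i) : margin π z x = margin π z x' :=
  margin_congr π fun i hi => h i (hzw hi)

lemma sum_pi_ratio (hpos : ∀ x, 0 < π x) (hsum : ∑ x : Fin N → X, π x = 1)
    {S : Finset (Fin N)} {a b : Fin N} (ha : a ∉ S) (hb : b ∉ S) (hab : a ≠ b) :
    ∑ x : Fin N → X, π x *
      (margin π (insert a S) x * margin π (insert b S) x /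
        (margin π (insert a (insert b S)) x * margin π S x)) = 1 := by
  classical
  have hXne : Nonempty X := by
    by_contra h
    haveI : IsEmpty X := not_nonempty_iff.mp h
    haveI : IsEmpty (Fin N → X) := ⟨fun f => IsEmpty.false (f a)⟩
    rw [Finset.univ_eq_empty, Finset.sum_empty] at hsum
    exact one_ne_zero hsum.symm
  have hcard : (0:ℝ) < (Fintype.card X : ℝ) := by exact_mod_cast Fintype.card_pos
  set A := insert a S with hA
  set B := insert b S with hB
  set C := insert a (insert b S) with hC
  have haB : a ∉ B := by simp [hB, hab, ha]
  have hbA : b ∉ A := by simp [hA, Ne.symm hab, hb]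
  have hAC : A ⊆ C := insert_subset_insert a (subset_insert b S)
  have hBC : B ⊆ C := subset_insert a B
  have hSC : S ⊆ C := (subset_insert b S).trans (subset_insert a _)
  set F : (Fin N → X) → ℝ := fun x =>
    margin π A x * margin π B x / (margin π C x * margin π S x) with hF
  have hFc : ∀ x x', (∀ i ∈ C, x i = x' i) → F x = F x' := by
    intro x x' h
    simp only [hF]
    rw [agree_subset π hAC h, agree_subset π hBC h, agree_subset π (Finset.Subset.refl C) h,
      agree_subset π hSC h]
  have hgroup := grouping π C F hFc
  have h1 : ∀ x, margin π C x * F x = margin π A x * margin π B x / margin π S x := by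
    intro x
    have hc := (margin_pos π hpos C x).ne'
    have hs := (margin_pos π hpos S x).ne'
    simp only [hF]
    rw [eq_div_iff hs]
    field_simp
  have e1 : ∑ x : Fin N → X, margin π C x * F x
      = ∑ x : Fin N → X, margin π A x * margin π B x / margin π S x :=
    Finset.sum_congr rfl fun x _ => h1 x
  have h2 : (Fintype.card X : ℝ) *
      ∑ x : Fin N → X, margin π A x * margin π B x / margin π S x
      = ∑ x : Fin N → X, margin π A x := by
    rw [← sum_update b (fun x => margin π A x * margin π B x / margin π S x)]
    refine Finset.sum_congr rfl fun x _ => ?_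
    have hterm : ∀ v : X,
        margin π A (Function.update x b v) * margin π B (Function.update x b v)
          / margin π S (Function.update x b v)
        = margin π A x / margin π S x * margin π B (Function.update x b v) := by
      intro v
      rw [margin_update π hbA, margin_update π hb]
      ring
    rw [Finset.sum_congr rfl fun v (_ : v ∈ univ) => hterm v, ← Finset.mul_sum]
    rw [hB, sum_margin_update π hb x]
    rw [div_mul_cancel₀ _ (margin_pos π hpos S x).ne']
  have h3 : (Fintype.card X : ℝ) * ∑ x : Fin N → X, margin π A x
      = ∑ x : Fin N → X, margin π S x := by
    rw [← sum_update a (fun x => margin π A x)]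
    refine Finset.sum_congr rfl fun x _ => ?_
    rw [hA]
    exact sum_margin_update π ha x
  have hKS : ∑ x : Fin N → X, margin π S x = (Fintype.card X : ℝ) ^ (N - S.card) :=
    sum_margin π hsum S
  have hCcard : C.card = S.card + 2 := by
    rw [hC, Finset.card_insert_of_notMem (by simpa [hB] using haB),
      Finset.card_insert_of_notMem hb]
  have hCN : C.card ≤ N := by
    have h := Finset.card_le_univ C
    simpa using h
  have hexp : N - S.card = (N - C.card) + 2 := by omega
  set P : ℝ := (Fintype.card X : ℝ) with hP
  have key1 : P ^ 2 * (∑ x : Fin N → X, margin π A x * margin π B x / margin π S x)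
      = P ^ (N - C.card) * P ^ 2 := by
    calc P ^ 2 * (∑ x : Fin N → X, margin π A x * margin π B x / margin π S x)
        = P * (P * ∑ x : Fin N → X, margin π A x * margin π B x / margin π S x) := by ring
      _ = P * ∑ x : Fin N → X, margin π A x := by rw [h2]
      _ = ∑ x : Fin N → X, margin π S x := h3
      _ = P ^ (N - S.card) := hKS
      _ = P ^ (N - C.card) * P ^ 2 := by rw [hexp, pow_add]
  have hP2 : P ^ 2 ≠ 0 := pow_ne_zero _ hcard.ne'
  have key2 : ∑ x : Fin N → X, margin π A x * margin π B x / margin π S x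
      = P ^ (N - C.card) := by
    apply mul_left_cancel₀ hP2
    rw [key1]
    ring
  have final : P ^ (N - C.card) * (∑ x : Fin N → X, π x * F x)
      = P ^ (N - C.card) * 1 := by
    rw [mul_one, ← hgroup, e1, key2]
  exact mul_left_cancel₀ (pow_ne_zero _ hcard.ne') final

lemma step_ineq (hpos : ∀ x, 0 < π x) (hsum : ∑ x : Fin N → X, π x = 1)
    {S : Finset (Fin N)} {a b : Fin N} (ha : a ∉ S) (hb : b ∉ S) (hab : a ≠ b) :
    ∑ x : Fin N → X, π x * Real.log (margin π (insert a S) x / margin π S x)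
      ≤ ∑ x : Fin N → X,
          π x * Real.log (margin π (insert a (insert b S)) x / margin π (insert b S) x) := by
  have key := sum_pi_ratio π hpos hsum ha hb hab
  rw [← sub_nonneg, ← Finset.sum_sub_distrib]
  set F : (Fin N → X) → ℝ := fun x =>
    margin π (insert a S) x * margin π (insert b S) x /
      (margin π (insert a (insert b S)) x * margin π S x) with hF
  have hpoint : ∀ x : Fin N → X,
      π x * (1 - F x)
        ≤ π x * Real.log (margin π (insert a (insert b S)) x / margin π (insert b S) x)
          - π x * Real.log (margin π (insert a S) x / margin π S x) := by
    intro x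
    have hA := margin_pos π hpos (insert a S) x
    have hB := margin_pos π hpos (insert b S) x
    have hC := margin_pos π hpos (insert a (insert b S)) x
    have hS := margin_pos π hpos S x
    have ht : 0 < F x := by simp only [hF]; positivity
    have hlog := Real.log_le_sub_one_of_pos ht
    rw [hF] at hlog
    rw [Real.log_div (mul_pos hA hB).ne' (mul_pos hC hS).ne',
      Real.log_mul hA.ne' hB.ne', Real.log_mul hC.ne' hS.ne'] at hlog
    rw [Real.log_div hC.ne' hB.ne', Real.log_div hA.ne' hS.ne', ← mul_sub]
    apply mul_le_mul_of_nonneg_left ?_ (hpos x).le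
    simp only [hF] at hlog ⊢
    linarith
  have hzero : ∑ x : Fin N → X, π x * (1 - F x) = 0 := by
    have hh : ∀ x : Fin N → X, π x * (1 - F x) = π x - π x * F x := fun x => by ring
    rw [Finset.sum_congr rfl fun x _ => hh x, Finset.sum_sub_distrib, hsum, key, sub_self]
  calc (0:ℝ) = ∑ x : Fin N → X, π x * (1 - F x) := hzero.symm
    _ ≤ _ := Finset.sum_le_sum fun x _ => hpoint x

end aux

/-- Information profile `f(i) = E_{x∼π, σ uniform}[log π(x_{σ(i+1)} | x_{σ(1)},…,x_{σ(i)})]`,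
indexed by `i : Fin N` (the conditioning set is the image under `σ` of the first `i`
indices, and the conditional is a ratio of marginals). -/
noncomputable def infoProfile {X : Type*} [Fintype X] [DecidableEq X] {N : ℕ}
    (π : (Fin N → X) → ℝ) (i : Fin N) : ℝ :=
  ((Nat.factorial N : ℝ))⁻¹ *
    ∑ σ : Equiv.Perm (Fin N), ∑ x : Fin N → X,
      π x * Real.log
        (margin π (insert (σ i) ((Finset.univ.filter (fun j => j < i)).image σ)) x
          / margin π ((Finset.univ.filter (fun j => j < i)).image σ) x)

lemma info_step {X : Type*} [Fintype X] [DecidableEq X] {N : ℕ} (π : (Fin N → X) → ℝ)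
    (hpos : ∀ x, 0 < π x) (hsum : ∑ x : Fin N → X, π x = 1)
    (i j : Fin N) (hij : (i : ℕ) + 1 = (j : ℕ)) :
    infoProfile π i ≤ infoProfile π j := by
  classical
  unfold infoProfile
  have hfac : (0:ℝ) ≤ ((Nat.factorial N : ℝ))⁻¹ := by positivity
  apply mul_le_mul_of_nonneg_left ?_ hfac
  have hne : i ≠ j := by
    intro h
    rw [h] at hij
    omega
  have hre := Fintype.sum_bijective (fun σ : Equiv.Perm (Fin N) => σ * Equiv.swap i j)
    (Group.mulRight_bijective (Equiv.swap i j))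
    (fun σ : Equiv.Perm (Fin N) => ∑ x : Fin N → X, π x * Real.log
        (margin π (insert ((σ * Equiv.swap i j) i)
            ((Finset.univ.filter (fun k => k < i)).image (σ * Equiv.swap i j))) x
          / margin π ((Finset.univ.filter (fun k => k < i)).image (σ * Equiv.swap i j)) x))
    (fun σ : Equiv.Perm (Fin N) => ∑ x : Fin N → X, π x * Real.log
        (margin π (insert (σ i) ((Finset.univ.filter (fun k => k < i)).image σ)) x
          / margin π ((Finset.univ.filter (fun k => k < i)).image σ) x))
    (fun σ => rfl)
  rw [← hre]
  apply Finset.sum_le_sum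
  intro σ _
  have himg : (Finset.univ.filter (fun k => k < i)).image (σ * Equiv.swap i j)
      = (Finset.univ.filter (fun k => k < i)).image σ := by
    apply Finset.image_congr
    intro k hk
    simp only [Finset.coe_filter, Set.mem_setOf_eq, mem_univ, true_and] at hk
    have hki : k ≠ i := ne_of_lt hk
    have hkj : k ≠ j := by
      rw [Fin.lt_def] at hk
      intro h
      rw [h] at hk
      omega
    simp [Equiv.Perm.mul_apply, Equiv.swap_apply_of_ne_of_ne hki hkj]
  have happ : (σ * Equiv.swap i j) i = σ j := by
    simp [Equiv.Perm.mul_apply]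
  have hf3 : (Finset.univ.filter (fun k => k < j))
      = insert i (Finset.univ.filter (fun k => k < i)) := by
    ext k
    simp only [Finset.mem_insert, Finset.mem_filter, Finset.mem_univ, true_and]
    rw [Fin.lt_def, Fin.lt_def, Fin.ext_iff]
    omega
  rw [happ, himg, hf3, Finset.image_insert]
  have haT : σ j ∉ (Finset.univ.filter (fun k => k < i)).image σ := by
    intro hmem
    obtain ⟨k, hk, hkeq⟩ := Finset.mem_image.mp hmem
    have : k = j := σ.injective hkeq
    rw [this] at hk
    simp only [Finset.mem_filter, Fin.lt_def] at hk
    omega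
  have hbT : σ i ∉ (Finset.univ.filter (fun k => k < i)).image σ := by
    intro hmem
    obtain ⟨k, hk, hkeq⟩ := Finset.mem_image.mp hmem
    have : k = i := σ.injective hkeq
    rw [this] at hk
    simp only [Finset.mem_filter, Fin.lt_def] at hk
    omega
  exact step_ineq π hpos hsum haT hbT (fun h => hne (σ.injective h).symm)


/-- The information profile is nondecreasing: `f(i−1) ≤ f(i)`. -/
theorem stmt11 {X : Type*} [Fintype X] [DecidableEq X] {N : ℕ} (hN : 2 ≤ N)
    (π : (Fin N → X) → ℝ)
    (hpos : ∀ x, 0 < π x) (hsum : ∑ x : Fin N → X, π x = 1) :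
    Monotone (infoProfile π) := by
  have key : ∀ d : ℕ, ∀ i j : Fin N, (j : ℕ) = (i : ℕ) + d →
      infoProfile π i ≤ infoProfile π j := by
    intro d
    induction d with
    | zero =>
      intro i j h
      have : i = j := Fin.ext (by omega)
      rw [this]
    | succ d ih =>
      intro i j h
      have hlt : (i : ℕ) + d < N := by
        have := j.isLt
        omega
      exact le_trans (ih i ⟨(i : ℕ) + d, hlt⟩ rfl)
        (info_step π hpos hsum ⟨(i : ℕ) + d, hlt⟩ j (by simp; omega))
  intro i j hij
  have h := Fin.le_def.mp hij
  exact key ((j : ℕ) - (i : ℕ)) i j (by omega)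
end

section
/- Let f : {0,...,N−1} → ℝ be strictly increasing with strictly convex discrete profile (i.e., Δf(i) = f(i)−f(i−1) strictly increasing). If a_0 = 0 < a_1 < ... < a_K = N minimizes A(a) = Σ_{i=0}^{N-1} f(i) − Σ_{k=0}^{K-1} (a_{k+1}−a_k) f(a_k) over all strictly increasing integer schedules from 0 to N of length K, then the increments s_k = a_k − a_{k−1} are non-increasing in k. -/
/-!
If some increment grows, `s_{k+1} > s_k`, move the knot `a_k` one step to the right. The left
Riemann sum gains `(s_{k+1} - 1) Δf(a_k + 1)` and loses `f(a_k) - f(a_{k-1})`. By strict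
convexity the loss is less than `s_k Δf(a_k + 1)`, and `Δf > 0` with `s_{k+1} - 1 ≥ s_k` makes the
gain at least that, so `A` strictly decreases, contradicting minimality.
-/

open Finset Function

noncomputable def leftRiemannSum (f : ℕ → ℝ) (K : ℕ) (b : ℕ → ℕ) : ℝ :=
  ∑ k ∈ range K, ((b (k + 1) : ℝ) - b k) * f (b k)

def bumpKnot (a : ℕ → ℕ) (k : ℕ) : ℕ → ℕ := update a k (a k + 1)

theorem bumpKnot_self (a : ℕ → ℕ) (k : ℕ) : bumpKnot a k k = a k + 1 := update_self k _ a

theorem bumpKnot_of_ne {i k : ℕ} (h : i ≠ k) (a : ℕ → ℕ) : bumpKnot a k i = a i :=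
  update_of_ne h _ a

theorem leftRiemannSum_bumpKnot (f : ℕ → ℝ) (a : ℕ → ℕ) {j K : ℕ} (hjK : j + 2 ≤ K) :
    leftRiemannSum f K (bumpKnot a (j + 1)) = leftRiemannSum f K a
      + (((a (j + 2) : ℝ) - a (j + 1) - 1) * (f (a (j + 1) + 1) - f (a (j + 1)))
        - (f (a (j + 1)) - f (a j))) := by
  obtain ⟨r, rfl⟩ := Nat.exists_eq_add_of_le hjK
  have before : ∀ i ∈ range j, i ≠ j + 1 ∧ i + 1 ≠ j + 1 := fun i hi => by
    simp only [mem_range] at hi; omega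
  have after : ∀ i ∈ range r, j + 2 + i ≠ j + 1 ∧ j + 2 + i + 1 ≠ j + 1 := fun i _ => by omega
  simp only [leftRiemannSum, sum_range_add, sum_range_succ]
  rw [sum_congr rfl fun i hi => by
      rw [bumpKnot_of_ne (before i hi).1, bumpKnot_of_ne (before i hi).2],
    sum_congr rfl fun i (hi : i ∈ range r) => by
      rw [bumpKnot_of_ne (after i hi).1, bumpKnot_of_ne (after i hi).2]]
  simp only [bumpKnot_self, bumpKnot_of_ne (show j ≠ j + 1 by omega),
    bumpKnot_of_ne (show j + 1 + 1 ≠ j + 1 by omega)]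
  push_cast
  ring

theorem sub_lt_mul_of_forall_succ_sub_lt (f : ℕ → ℝ) {m n : ℕ} (hmn : m < n) {D : ℝ}
    (h : ∀ i ∈ Ico m n, f (i + 1) - f i < D) : f n - f m < ((n : ℝ) - m) * D := by
  calc f n - f m = ∑ i ∈ Ico m n, (f (i + 1) - f i) := (sum_Ico_sub f hmn.le).symm
    _ < ∑ _i ∈ Ico m n, D := sum_lt_sum_of_nonempty (nonempty_Ico.mpr hmn) h
    _ = ((n : ℝ) - m) * D := by rw [sum_const, Nat.card_Ico, nsmul_eq_mul, Nat.cast_sub hmn.le]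

theorem sub_lt_mul_succ_sub_of_convex (N : ℕ) (f : ℕ → ℝ)
    (hmono : ∀ i, 1 ≤ i → i ≤ N - 1 → f (i - 1) < f i)
    (hconv : ∀ i j, 1 ≤ i → i < j → j ≤ N - 1 → f i - f (i - 1) < f j - f (j - 1))
    {m n : ℕ} {d : ℝ} (hmn : m < n) (hn : n + 1 ≤ N - 1) (hd : (n : ℝ) - m ≤ d) :
    f n - f m < d * (f (n + 1) - f n) := by
  have hstep : 0 ≤ f (n + 1) - f n := sub_nonneg.mpr (hmono (n + 1) (by omega) hn).le
  calc f n - f m < ((n : ℝ) - m) * (f (n + 1) - f n) :=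
        sub_lt_mul_of_forall_succ_sub_lt f hmn fun i hi =>
          hconv (i + 1) (n + 1) (by omega) (by simp only [mem_Ico] at hi; omega) hn
    _ ≤ d * (f (n + 1) - f n) := mul_le_mul_of_nonneg_right hd hstep

theorem bumpKnot_lt_succ {K j : ℕ} {a : ℕ → ℕ} (hainc : ∀ k < K, a k < a (k + 1))
    (hgap : a (j + 1) + 1 < a (j + 2)) :
    ∀ k < K, bumpKnot a (j + 1) k < bumpKnot a (j + 1) (k + 1) := by
  intro k hk
  by_cases hkj : k = j
  · subst hkj
    rw [bumpKnot_of_ne (by omega), bumpKnot_self]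
    exact Nat.lt_succ_of_lt (hainc k hk)
  by_cases hkj' : k = j + 1
  · subst hkj'
    rwa [bumpKnot_self, bumpKnot_of_ne (by omega)]
  rw [bumpKnot_of_ne hkj', bumpKnot_of_ne (by omega)]
  exact hainc k hk

theorem stmt19_general (N K : ℕ)
    (f : ℕ → ℝ)
    (hmono : ∀ i, 1 ≤ i → i ≤ N - 1 → f (i - 1) < f i)
    (hconv : ∀ i j, 1 ≤ i → i < j → j ≤ N - 1 →
        f i - f (i - 1) < f j - f (j - 1))
    (A : (ℕ → ℕ) → ℝ)
    (hA : ∀ b : ℕ → ℕ, A b = (∑ i ∈ Finset.range N, f i)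
        - ∑ k ∈ Finset.range K, ((b (k + 1) : ℝ) - (b k : ℝ)) * f (b k))
    (a : ℕ → ℕ) (ha0 : a 0 = 0) (haK : a K = N)
    (hainc : ∀ k < K, a k < a (k + 1))
    (hmin : ∀ b : ℕ → ℕ, b 0 = 0 → b K = N → (∀ k < K, b k < b (k + 1)) → A a ≤ A b) :
    ∀ k, 1 ≤ k → k < K → a (k + 1) - a k ≤ a k - a (k - 1) := by
  intro k hk hkK
  obtain ⟨j, rfl⟩ : ∃ j, k = j + 1 := ⟨k - 1, by omega⟩
  by_contra! hgap
  replace hgap : a (j + 1) - a j < a (j + 2) - a (j + 1) := by simpa using hgap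
  have hj : a j < a (j + 1) := hainc j (by omega)
  have haN : a (j + 2) ≤ N :=
    haK ▸ (strictMonoOn_Iic_of_lt_succ hainc).monotoneOn (Set.mem_Iic.mpr (by omega : j + 2 ≤ K))
      Set.self_mem_Iic (by omega : j + 2 ≤ K)
  have hd : (a (j + 1) : ℝ) - a j ≤ a (j + 2) - a (j + 1) - 1 := by
    have hnat : a (j + 1) + (a (j + 1) + 1) ≤ a (j + 2) + a j := by omega
    linarith [(by exact_mod_cast hnat : (a (j + 1) + (a (j + 1) + 1) : ℝ) ≤ a (j + 2) + a j)]
  have hgain := sub_lt_mul_succ_sub_of_convex N f hmono hconv hj (by omega) hd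
  have hle := hmin (bumpKnot a (j + 1)) (by rwa [bumpKnot_of_ne (by omega)])
    (by rwa [bumpKnot_of_ne (by omega)]) (bumpKnot_lt_succ hainc (by omega))
  rw [hA, hA] at hle
  change _ - leftRiemannSum f K a ≤ _ - leftRiemannSum f K _ at hle
  rw [leftRiemannSum_bumpKnot f a (by omega)] at hle
  linarith

/-- If `f` is strictly increasing with strictly convex discrete profile (`Δf` strictly
increasing), then any minimizer of the Riemann-sum objective `A` over strictly increasing
integer schedules `0 = a_0 < … < a_K = N` has non-increasing increments `s_k = a_k − a_{k−1}`. -/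
theorem stmt19 (N K : ℕ) (hK : 2 ≤ K) (hKN : K ≤ N)
    (f : ℕ → ℝ)
    (hmono : ∀ i, 1 ≤ i → i ≤ N - 1 → f (i - 1) < f i)
    (hconv : ∀ i j, 1 ≤ i → i < j → j ≤ N - 1 →
        f i - f (i - 1) < f j - f (j - 1))
    (A : (ℕ → ℕ) → ℝ)
    (hA : ∀ b : ℕ → ℕ, A b = (∑ i ∈ Finset.range N, f i)
        - ∑ k ∈ Finset.range K, ((b (k + 1) : ℝ) - (b k : ℝ)) * f (b k))
    (a : ℕ → ℕ) (ha0 : a 0 = 0) (haK : a K = N)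
    (hainc : ∀ k < K, a k < a (k + 1))
    (hmin : ∀ b : ℕ → ℕ, b 0 = 0 → b K = N → (∀ k < K, b k < b (k + 1)) → A a ≤ A b) :
    ∀ k, 1 ≤ k → k < K → a (k + 1) - a k ≤ a k - a (k - 1) :=
  stmt19_general N K f hmono hconv A hA a ha0 haK hainc hmin
end
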